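/- Let P be a d×d complex matrix that is an orthogonal projection (P² = P and P† = P) and let w be a d×d Hermitian matrix. Then ‖P w + w P − P w P‖₂² ≤ 2 Tr(P w²), where ‖X‖₂² = Tr(X† X) is the squared Frobenius norm. (In particular Tr(P w²) is a nonnegative real number.) -/
import Mathlib


noncomputable section
open Matrix Complex

lemma tr_star_self_im_re {d : ℕ} (X : Matrix (Fin d) (Fin d) ℂ) :
    (Matrix.trace (Xᴴ * X)).im = 0 ∧ 0 ≤ (Matrix.trace (Xᴴ * X)).re := by
  have h : Matrix.trace (Xᴴ * X) = ((∑ i, ∑ j, Complex.normSq (X j i) : ℝ) : ℂ) := by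
    push_cast
    simp only [Complex.normSq_eq_conj_mul_self]
    simp [Matrix.trace, Matrix.mul_apply, Matrix.conjTranspose_apply, Matrix.diag]
  rw [h]
  refine ⟨by simp, ?_⟩
  simp only [Complex.ofReal_re]
  exact Finset.sum_nonneg fun i _ => Finset.sum_nonneg fun j _ => Complex.normSq_nonneg _

/-- for an orthogonal projection `P` (`P² = P`, `P† = P`) and a Hermitian
matrix `w`, we have `‖P w + w P − P w P‖₂² ≤ 2 Tr(P w²)`; in particular `Tr(P w²)` is a
nonnegative real number. -/
theorem frobenius_sq_projection_le {d : ℕ}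
    (P w : Matrix (Fin d) (Fin d) ℂ)
    (hP2 : P * P = P) (hP : Pᴴ = P) (hw : wᴴ = w) :
    (Matrix.trace (P * (w * w))).im = 0 ∧
    0 ≤ (Matrix.trace (P * (w * w))).re ∧
    (Matrix.trace ((P * w + w * P - P * w * P)ᴴ * (P * w + w * P - P * w * P))).re ≤
      2 * (Matrix.trace (P * (w * w))).re := by
  have hPPw : P * (P * w) = P * w := by rw [← mul_assoc, hP2]
  have hPPwP : P * (P * w * P) = P * w * P := by rw [← mul_assoc, ← mul_assoc, hP2]
  -- `Tr(P w²)` is the trace of `(wP)† (wP)`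
  have hs : Matrix.trace ((w * P)ᴴ * (w * P)) = Matrix.trace (P * (w * w)) := by
    rw [conjTranspose_mul, hP, hw, Matrix.trace_mul_comm (P * w) (w * P),
      mul_assoc w P (P * w), hPPw, Matrix.trace_mul_comm w (P * w), mul_assoc]
  -- the nine cross terms
  have h2 : Matrix.trace (P * w * (w * P)) = Matrix.trace (P * (w * w)) := by
    rw [Matrix.trace_mul_comm (P * w) (w * P), mul_assoc w P (P * w), hPPw,
      Matrix.trace_mul_comm w (P * w), mul_assoc]
  have h3 : Matrix.trace (P * w * (P * w * P)) = Matrix.trace (P * w * (P * w)) := by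
    rw [Matrix.trace_mul_comm (P * w) (P * w * P), mul_assoc (P * w) P (P * w), hPPw]
  have h4 : Matrix.trace (w * P * (P * w)) = Matrix.trace (P * (w * w)) := by
    rw [mul_assoc w P (P * w), hPPw, Matrix.trace_mul_comm w (P * w), mul_assoc]
  have h5 : Matrix.trace (w * P * (w * P)) = Matrix.trace (P * w * (P * w)) := by
    rw [mul_assoc w P (w * P), Matrix.trace_mul_comm w (P * (w * P)),
      ← mul_assoc P w P, mul_assoc (P * w) P w]
  have h6 : Matrix.trace (w * P * (P * w * P)) = Matrix.trace (P * w * (P * w)) := by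
    rw [mul_assoc w P (P * w * P), hPPwP, Matrix.trace_mul_comm w (P * w * P),
      mul_assoc (P * w) P w]
  have h7 : Matrix.trace (P * w * P * (P * w)) = Matrix.trace (P * w * (P * w)) := by
    rw [mul_assoc (P * w) P (P * w), hPPw]
  have h8 : Matrix.trace (P * w * P * (w * P)) = Matrix.trace (P * w * (P * w)) :=
    (Matrix.trace_mul_comm _ _).trans h6
  have h9 : Matrix.trace (P * w * P * (P * w * P)) = Matrix.trace (P * w * (P * w)) := by
    rw [mul_assoc (P * w) P (P * w * P), hPPwP, h3]
  -- hermiticity of the relevant matrices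
  have hB : (P * w * P)ᴴ = P * w * P := by
    simp only [conjTranspose_mul, hP, hw, ← mul_assoc]
  have hA : (P * w + w * P - P * w * P)ᴴ = P * w + w * P - P * w * P := by
    simp only [conjTranspose_sub, conjTranspose_add, conjTranspose_mul, hP, hw, ← mul_assoc]
    abel
  -- the trace of B† B equals t
  have hBt : Matrix.trace ((P * w * P)ᴴ * (P * w * P)) = Matrix.trace (P * w * (P * w)) := by
    rw [hB, h9]
  -- key trace identity
  have key : Matrix.trace ((P * w + w * P - P * w * P)ᴴ * (P * w + w * P - P * w * P)) =
      2 * Matrix.trace (P * (w * w)) - Matrix.trace (P * w * (P * w)) := by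
    rw [hA]
    simp only [add_mul, mul_add, sub_mul, mul_sub, Matrix.trace_add, Matrix.trace_sub]
    rw [h2, h3, h4, h5, h6, h7, h8, h9]
    ring
  obtain ⟨him, hre⟩ := tr_star_self_im_re (w * P)
  obtain ⟨htim, htre⟩ := tr_star_self_im_re (P * w * P)
  rw [hs] at him hre
  rw [hBt] at htre
  refine ⟨him, hre, ?_⟩
  rw [key]
  simp only [Complex.sub_re, Complex.mul_re, Complex.re_ofNat, Complex.im_ofNat, him]
  linarith
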